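/- arXiv:2405.19800 — 6 statements merged into one kernel-verified Lean document; each statement's English description precedes it below -/
import Mathlib

section
/- Let (T,e) be a metric space, (U_i)_{i=0}^n a finite family of open sets covering T, of order at most r (no point lies in more than r+1 of the U_i), and suppose there exists c > 0 such that Σ_{j=0}^n e(x, U_j^c) ≥ c for all x ∈ T. Define μ_i(x) = e(x,U_i^c) / Σ_j e(x,U_j^c). Then for each i, |μ_i(x) − μ_i(y)| ≤ (2r+3)·e(x,y) / Σ_j e(y, U_j^c) for all x, y ∈ T. -/
open Metric

/-- Lipschitz estimate for the partition of unity subordinate to a finite open cover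
of order at most `r`: `|μ_i(x) − μ_i(y)| ≤ (2r+3)·e(x,y) / Σ_j e(y, U_j^c)`. -/
theorem stmt3 {T : Type*} [MetricSpace T] (n r : ℕ) (U : Fin (n + 1) → Set T)
    (hopen : ∀ i, IsOpen (U i)) (hcover : ⋃ i, U i = Set.univ)
    (horder : ∀ x : T, {i | x ∈ U i}.ncard ≤ r + 1)
    (c : ℝ) (hc : 0 < c) (hsum : ∀ x : T, c ≤ ∑ j, infDist x (U j)ᶜ)
    (μ : Fin (n + 1) → T → ℝ)
    (hμ : ∀ i x, μ i x = infDist x (U i)ᶜ / ∑ j, infDist x (U j)ᶜ) :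
    ∀ (i : Fin (n + 1)) (x y : T),
      |μ i x - μ i y| ≤ (2 * r + 3) * dist x y / ∑ j, infDist y (U j)ᶜ := by
  classical
  intro i x y
  set S : T → ℝ := fun z => ∑ j, infDist z (U j)ᶜ with hS
  have hSx : c ≤ S x := hsum x
  have hSy : c ≤ S y := hsum y
  have hSxpos : (0:ℝ) < S x := lt_of_lt_of_le hc hSx
  have hSypos : (0:ℝ) < S y := lt_of_lt_of_le hc hSy
  have hlip : ∀ (j : Fin (n+1)), |infDist y (U j)ᶜ - infDist x (U j)ᶜ| ≤ dist x y := by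
    intro j
    rw [abs_sub_le_iff]
    constructor
    · have := infDist_le_infDist_add_dist (x := y) (y := x) (s := (U j)ᶜ)
      rw [dist_comm] at this
      linarith
    · have := infDist_le_infDist_add_dist (x := x) (y := y) (s := (U j)ᶜ)
      linarith
  -- cardinality bound
  have hcard : ∀ z : T, (Finset.univ.filter (fun j => z ∈ U j)).card ≤ r + 1 := by
    intro z
    have h := horder z
    have heq : {i | z ∈ U i} = ↑(Finset.univ.filter (fun j => z ∈ U j)) := by
      ext j; simp
    rwa [heq, Set.ncard_coe_finset] at h
  set A : Finset (Fin (n+1)) := Finset.univ.filter (fun j => x ∈ U j ∨ y ∈ U j) with hA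
  have hAcard : (A.card : ℝ) ≤ 2 * r + 2 := by
    have hsub : A ⊆ (Finset.univ.filter (fun j => x ∈ U j)) ∪
        (Finset.univ.filter (fun j => y ∈ U j)) := by
      intro j hj
      simp only [hA, Finset.mem_filter, Finset.mem_univ, true_and] at hj
      simp [Finset.mem_union, hj]
    have h1 := Finset.card_le_card hsub
    have h2 := Finset.card_union_le (Finset.univ.filter (fun j => x ∈ U j))
        (Finset.univ.filter (fun j => y ∈ U j))
    have := hcard x
    have := hcard y
    have : A.card ≤ 2 * r + 2 := by omega
    exact_mod_cast this
  have hSdiff : |S y - S x| ≤ (2 * r + 2) * dist x y := by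
    have h1 : |S y - S x| ≤ ∑ j, |infDist y (U j)ᶜ - infDist x (U j)ᶜ| := by
      rw [hS]
      simp only
      rw [← Finset.sum_sub_distrib]
      exact Finset.abs_sum_le_sum_abs _ _
    have hzero : ∀ j ∈ Finset.univ, j ∉ A →
        |infDist y (U j)ᶜ - infDist x (U j)ᶜ| = 0 := by
      intro j _ hj
      simp only [hA, Finset.mem_filter, Finset.mem_univ, true_and, not_or] at hj
      have e1 : infDist y (U j)ᶜ = 0 := infDist_zero_of_mem hj.2
      have e2 : infDist x (U j)ᶜ = 0 := infDist_zero_of_mem hj.1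
      rw [e1, e2]; simp
    have h2 : ∑ j, |infDist y (U j)ᶜ - infDist x (U j)ᶜ|
        = ∑ j ∈ A, |infDist y (U j)ᶜ - infDist x (U j)ᶜ| :=
      (Finset.sum_subset A.subset_univ (fun j hj hj' => hzero j hj hj')).symm
    have h3 : ∑ j ∈ A, |infDist y (U j)ᶜ - infDist x (U j)ᶜ| ≤ A.card • dist x y :=
      Finset.sum_le_card_nsmul A _ _ (fun j _ => hlip j)
    have h4 : (A.card : ℝ) * dist x y ≤ (2 * r + 2) * dist x y :=
      mul_le_mul_of_nonneg_right hAcard dist_nonneg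
    rw [nsmul_eq_mul] at h3
    linarith
  -- basic facts about μ i x
  have hfnonneg : ∀ (j : Fin (n+1)) (z : T), (0:ℝ) ≤ infDist z (U j)ᶜ :=
    fun j z => infDist_nonneg
  have hfle : infDist x (U i)ᶜ ≤ S x :=
    Finset.single_le_sum (fun j _ => hfnonneg j x) (Finset.mem_univ i)
  have hμx0 : 0 ≤ μ i x := by
    rw [hμ]; exact div_nonneg (hfnonneg i x) hSxpos.le
  have hμx1 : μ i x ≤ 1 := by
    rw [hμ]; exact div_le_one_of_le₀ hfle hSxpos.le
  have key : μ i x - μ i y =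
      (infDist x (U i)ᶜ - infDist y (U i)ᶜ) / S y + μ i x * ((S y - S x) / S y) := by
    rw [hμ, hμ]
    have hx' : (∑ j, infDist x (U j)ᶜ) ≠ 0 := hSxpos.ne'
    have hy' : (∑ j, infDist y (U j)ᶜ) ≠ 0 := hSypos.ne'
    simp only [hS]
    field_simp
    ring
  rw [key]
  have hlipi : |infDist x (U i)ᶜ - infDist y (U i)ᶜ| ≤ dist x y := by
    rw [abs_sub_comm]; exact hlip i
  have hbound : |(infDist x (U i)ᶜ - infDist y (U i)ᶜ) / S y + μ i x * ((S y - S x) / S y)|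
      ≤ dist x y / S y + (2 * r + 2) * dist x y / S y := by
    refine (abs_add_le _ _).trans ?_
    gcongr
    · rw [abs_div, abs_of_pos hSypos]
      exact div_le_div_of_nonneg_right hlipi hSypos.le |>.trans_eq rfl
    · rw [abs_mul, abs_div, abs_of_pos hSypos, abs_of_nonneg hμx0]
      calc μ i x * (|S y - S x| / S y) ≤ 1 * (|S y - S x| / S y) := by
            apply mul_le_mul_of_nonneg_right hμx1
            positivity
        _ = |S y - S x| / S y := one_mul _
        _ ≤ (2 * r + 2) * dist x y / S y :=
            div_le_div_of_nonneg_right hSdiff hSypos.le |>.trans_eq rfl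
  refine hbound.trans ?_
  have : dist x y / S y + (2 * r + 2) * dist x y / S y = (2 * r + 3) * dist x y / S y := by
    field_simp; ring
  rw [this]
end

section
/- Let S be a metrisable topological space such that the transfinite dimensional kernel k(S) is empty. Then the set S_ω (the ω-th stage of the transfinite kernel construction) has empty interior in S. -/
/-- A family of sets has order at most `r` if no `r+2` distinct members of it
have a common point. -/
def famOrderLE {X : Type*} (𝒱 : Set (Set X)) (r : ℕ) : Prop :=
  ∀ F : Finset (Set X), ↑F ⊆ 𝒱 → (⋂₀ (F : Set (Set X))).Nonempty → F.card ≤ r + 1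

/-- The covering dimension of `X` is at most `r`: every finite open cover has a
finite open refinement of order at most `r`. -/
def covdimLE (X : Type*) [TopologicalSpace X] (r : ℕ) : Prop :=
  ∀ 𝒰 : Finset (Set X), (∀ U ∈ 𝒰, IsOpen U) → ⋃₀ (𝒰 : Set (Set X)) = Set.univ →
    ∃ 𝒱 : Finset (Set X), (∀ V ∈ 𝒱, IsOpen V) ∧ ⋃₀ (𝒱 : Set (Set X)) = Set.univ ∧
      (∀ V ∈ 𝒱, ∃ U ∈ 𝒰, V ⊆ U) ∧ famOrderLE (𝒱 : Set (Set X)) r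

/-- `D_n(A)`: the union (taken inside `S`) of all sets `U` open in the subspace `A`
with `dim cl_A(U) ≤ n`. -/
def Dnat {S : Type*} [TopologicalSpace S] (A : Set S) (n : ℕ) : Set S :=
  ⋃₀ {W : Set S | ∃ V : Set A, IsOpen V ∧ covdimLE (closure V) n ∧ W = Subtype.val '' V}

/-- `D` indexed by an ordinal `o < ω` (empty for infinite `o`). -/
def Dord {S : Type*} [TopologicalSpace S] (A : Set S) (o : Ordinal) : Set S :=
  ⋃ (n : ℕ) (_ : (n : Ordinal) = o), Dnat A n

/-- The transfinite sequence `S_α = S \ ⋃_{β<α} D_β(S)`, where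
`D_β(S) = D_{l(β)}(S_{λ(β)})` with `β = λ(β) + l(β)`, `λ(β)` limit and `l(β)` finite. -/
noncomputable def kseq (S : Type*) [TopologicalSpace S] : Ordinal → Set S :=
  WellFounded.fix Ordinal.lt_wf
    (fun α rec =>
      Set.univ \ ⋃ β : {b : Ordinal // b < α},
        Dord (rec (Ordinal.omega0 * (β.1 / Ordinal.omega0))
          (lt_of_le_of_lt (Ordinal.mul_div_le β.1 Ordinal.omega0) β.2))
          (β.1 % Ordinal.omega0))

open Topology Set

lemma covdimLE_of_isClosedEmbedding {X Y : Type*} [TopologicalSpace X] [TopologicalSpace Y]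
    {f : X → Y} (hf : Topology.IsClosedEmbedding f) {r : ℕ} (h : covdimLE Y r) :
    covdimLE X r := by
  classical
  intro 𝒰 hopen hcov
  by_cases hX : Nonempty X
  · obtain ⟨x₀⟩ := hX
    have hx₀ : x₀ ∈ ⋃₀ (𝒰 : Set (Set X)) := hcov ▸ Set.mem_univ x₀
    obtain ⟨U₀, hU₀, -⟩ := hx₀
    have hext : ∀ U ∈ 𝒰, ∃ O : Set Y, IsOpen O ∧ f ⁻¹' O = U := fun U hU =>
      hf.isInducing.isOpen_iff.mp (hopen U hU)
    let g : Set X → Set Y := fun U =>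
      if h : ∃ O : Set Y, IsOpen O ∧ f ⁻¹' O = U then h.choose else ∅
    have hg : ∀ U ∈ 𝒰, IsOpen (g U) ∧ f ⁻¹' (g U) = U := by
      intro U hU
      have hh := hext U hU
      simp only [g, dif_pos hh]
      exact hh.choose_spec
    set 𝒞 : Finset (Set Y) := 𝒰.image g ∪ {(Set.range f)ᶜ} with h𝒞
    have h𝒞open : ∀ C ∈ 𝒞, IsOpen C := by
      intro C hC
      rcases Finset.mem_union.mp hC with hC | hC
      · obtain ⟨U, hU, rfl⟩ := Finset.mem_image.mp hC
        exact (hg U hU).1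
      · rw [Finset.mem_singleton.mp hC]
        exact hf.isClosed_range.isOpen_compl
    have h𝒞cov : ⋃₀ (𝒞 : Set (Set Y)) = Set.univ := by
      apply Set.eq_univ_of_forall
      intro y
      by_cases hy : y ∈ Set.range f
      · obtain ⟨x, rfl⟩ := hy
        have hx : x ∈ ⋃₀ (𝒰 : Set (Set X)) := hcov ▸ Set.mem_univ x
        obtain ⟨U, hU, hxU⟩ := hx
        refine ⟨g U, Finset.mem_coe.mpr (Finset.mem_union_left _ (Finset.mem_image_of_mem g hU)), ?_⟩
        rw [← (hg U hU).2] at hxU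
        exact hxU
      · exact ⟨(Set.range f)ᶜ,
          Finset.mem_coe.mpr (Finset.mem_union_right _ (Finset.mem_singleton_self _)), hy⟩
    obtain ⟨𝒱, hVopen, hVcov, hVref, hVord⟩ := h 𝒞 h𝒞open h𝒞cov
    refine ⟨𝒱.image (f ⁻¹' ·), ?_, ?_, ?_, ?_⟩
    · intro W hW
      obtain ⟨V, hV, rfl⟩ := Finset.mem_image.mp hW
      exact (hVopen V hV).preimage hf.continuous
    · apply Set.eq_univ_of_forall
      intro x
      have hfx : f x ∈ ⋃₀ (𝒱 : Set (Set Y)) := hVcov ▸ Set.mem_univ _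
      obtain ⟨V, hV, hfxV⟩ := hfx
      exact ⟨f ⁻¹' V, Finset.mem_coe.mpr (Finset.mem_image_of_mem _ hV), hfxV⟩
    · intro W hW
      obtain ⟨V, hV, rfl⟩ := Finset.mem_image.mp hW
      obtain ⟨C, hC, hVC⟩ := hVref V hV
      rcases Finset.mem_union.mp hC with hC | hC
      · obtain ⟨U, hU, rfl⟩ := Finset.mem_image.mp hC
        exact ⟨U, hU, (hg U hU).2 ▸ Set.preimage_mono hVC⟩
      · refine ⟨U₀, hU₀, fun x hx => ?_⟩
        rw [Finset.mem_singleton.mp hC] at hVC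
        exact absurd (Set.mem_range_self (f := f) x) (hVC hx)
    · intro F hF hFne
      obtain ⟨x, hx⟩ := hFne
      have hsel : ∀ W ∈ F, ∃ V ∈ 𝒱, f ⁻¹' V = W := by
        intro W hW
        obtain ⟨V, hV, rfl⟩ := Finset.mem_image.mp (Finset.mem_coe.mp (hF hW))
        exact ⟨V, hV, rfl⟩
      let σ : Set X → Set Y := fun W => if h : ∃ V ∈ 𝒱, f ⁻¹' V = W then h.choose else ∅
      have hσ : ∀ W ∈ F, σ W ∈ 𝒱 ∧ f ⁻¹' (σ W) = W := by
        intro W hW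
        have hh := hsel W hW
        simp only [σ, dif_pos hh]
        exact ⟨hh.choose_spec.1, hh.choose_spec.2⟩
      have hinj : Set.InjOn σ ↑F := by
        intro W hW W' hW' hEq
        rw [← (hσ W hW).2, ← (hσ W' hW').2, hEq]
      have hcard : (F.image σ).card = F.card := Finset.card_image_of_injOn hinj
      have hle := hVord (F.image σ) ?_ ?_
      · rwa [hcard] at hle
      · intro V hV
        obtain ⟨W, hW, rfl⟩ := Finset.mem_image.mp (Finset.mem_coe.mp hV)
        exact (hσ W hW).1
      · refine ⟨f x, ?_⟩
        intro V hV
        obtain ⟨W, hW, rfl⟩ := Finset.mem_image.mp (Finset.mem_coe.mp hV)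
        have hxW : x ∈ W := hx W hW
        rw [← (hσ W hW).2] at hxW
        exact hxW
  · refine ⟨∅, by simp, ?_, by simp, ?_⟩
    · rw [Finset.coe_empty, Set.sUnion_empty]
      exact (Set.univ_eq_empty_iff.mpr (not_nonempty_iff.mp hX)).symm
    · intro F hF hFne
      obtain ⟨x, -⟩ := hFne
      exact absurd ⟨x⟩ hX

lemma covdimLE_down {X : Type*} [TopologicalSpace X] {A : Set X} {T : Set A} {C : Set X}
    (hC : IsClosed C) (hsub : C ⊆ Subtype.val '' T) {n : ℕ} (h : covdimLE T n) :
    covdimLE C n := by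
  have hCA : ∀ c ∈ C, c ∈ A := by
    intro c hc
    obtain ⟨a, -, rfl⟩ := hsub hc
    exact a.2
  have hmem : ∀ c : C, (⟨c.1, hCA c.1 c.2⟩ : A) ∈ T := by
    intro c
    obtain ⟨a, haT, ha⟩ := hsub c.2
    have : (⟨c.1, hCA c.1 c.2⟩ : A) = a := Subtype.ext ha.symm
    rw [this]
    exact haT
  let f : C → T := fun c => ⟨⟨c.1, hCA c.1 c.2⟩, hmem c⟩
  have hcont : Continuous f :=
    Continuous.subtype_mk (Continuous.subtype_mk continuous_subtype_val _) _
  have houter : Continuous (fun t : T => t.1.1) :=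
    continuous_subtype_val.comp continuous_subtype_val
  have hcomp : (fun t : T => t.1.1) ∘ f = (Subtype.val : C → X) := rfl
  have hind : Topology.IsInducing f :=
    Topology.IsInducing.of_comp hcont houter (by rw [hcomp]; exact Topology.IsInducing.subtypeVal)
  have hinj : Function.Injective f := by
    intro a b hab
    exact Subtype.ext (congrArg (fun t : T => t.1.1) hab)
  have hrange : Set.range f = (fun t : T => t.1.1) ⁻¹' C := by
    ext t
    constructor
    · rintro ⟨c, rfl⟩
      exact c.2
    · intro ht
      exact ⟨⟨t.1.1, ht⟩, Subtype.ext (Subtype.ext rfl)⟩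
  have hclosed : Topology.IsClosedEmbedding f :=
    ⟨⟨hind, hinj⟩, hrange ▸ hC.preimage houter⟩
  exact covdimLE_of_isClosedEmbedding hclosed h

lemma covdimLE_up {X : Type*} [TopologicalSpace X] {A : Set X} {C : Set X} (hCA : C ⊆ A) {n : ℕ}
    (h : covdimLE C n) : covdimLE ((Subtype.val : A → X) ⁻¹' C) n := by
  let f : ((Subtype.val : A → X) ⁻¹' C) → C := fun z => ⟨z.1.1, z.2⟩
  have hcont : Continuous f :=
    Continuous.subtype_mk (continuous_subtype_val.comp continuous_subtype_val) _
  have hcomp : (Subtype.val : C → X) ∘ f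
      = (Subtype.val : A → X) ∘ (Subtype.val : ((Subtype.val : A → X) ⁻¹' C) → A) := rfl
  have hind : Topology.IsInducing f :=
    Topology.IsInducing.of_comp hcont continuous_subtype_val
      (by rw [hcomp]; exact Topology.IsInducing.subtypeVal.comp Topology.IsInducing.subtypeVal)
  have hinj : Function.Injective f := by
    intro a b hab
    exact Subtype.ext (Subtype.ext (congrArg (Subtype.val : C → X) hab))
  have hsurj : Function.Surjective f := by
    intro c
    exact ⟨⟨⟨c.1, hCA c.2⟩, c.2⟩, Subtype.ext rfl⟩
  have hclosed : Topology.IsClosedEmbedding f :=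
    ⟨⟨hind, hinj⟩, by rw [Set.range_eq_univ.mpr hsurj]; exact isClosed_univ⟩
  exact covdimLE_of_isClosedEmbedding hclosed h

set_option maxHeartbeats 1000000 in
lemma kseq_eq (S : Type*) [TopologicalSpace S] (α : Ordinal) :
    kseq S α = Set.univ \ ⋃ β : {b : Ordinal // b < α},
      Dord (kseq S (Ordinal.omega0 * (β.1 / Ordinal.omega0))) (β.1 % Ordinal.omega0) := by
  unfold kseq
  exact WellFounded.fix_eq _ _ _

lemma kseq_zero (S : Type*) [TopologicalSpace S] : kseq S 0 = Set.univ := by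
  rw [kseq_eq]
  haveI : IsEmpty {b : Ordinal // b < (0 : Ordinal)} :=
    ⟨fun b => (by simpa using b.2)⟩
  rw [Set.iUnion_of_empty, Set.diff_empty]

lemma notin_kseq_omega {S : Type*} [TopologicalSpace S] {x : S} {n : ℕ}
    (hx : x ∈ Dnat (Set.univ : Set S) n) : x ∉ kseq S Ordinal.omega0 := by
  rw [kseq_eq]
  rintro ⟨-, hnot⟩
  apply hnot
  refine Set.mem_iUnion.mpr ⟨⟨(n : Ordinal), Ordinal.nat_lt_omega0 n⟩, ?_⟩
  have h1 : (n : Ordinal) / Ordinal.omega0 = 0 :=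
    Ordinal.div_eq_zero_of_lt (Ordinal.nat_lt_omega0 n)
  have h2 : (n : Ordinal) % Ordinal.omega0 = n :=
    Ordinal.mod_eq_of_lt (Ordinal.nat_lt_omega0 n)
  show x ∈ Dord _ _
  rw [h1, mul_zero, h2, kseq_zero]
  exact Set.mem_iUnion.mpr ⟨n, Set.mem_iUnion.mpr ⟨rfl, hx⟩⟩

lemma mem_Dnat_univ {S : Type*} [TopologicalSpace S] [RegularSpace S] {A U : Set S}
    (hUo : IsOpen U) (hUA : U ⊆ A) {n : ℕ} {y : S} (hyU : y ∈ U) (hyD : y ∈ Dnat A n) :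
    y ∈ Dnat (Set.univ : Set S) n := by
  obtain ⟨W', ⟨V, hVopen, hVdim, rfl⟩, hyW⟩ := hyD
  obtain ⟨O, hOopen, hOV⟩ := Topology.IsInducing.subtypeVal.isOpen_iff.mp hVopen
  have himg : Subtype.val '' V = A ∩ O := by
    rw [← hOV, Subtype.image_preimage_coe]
  have hyO : y ∈ O := (himg ▸ hyW).2
  have hP : IsOpen (O ∩ U) := hOopen.inter hUo
  have hyP : y ∈ O ∩ U := ⟨hyO, hyU⟩
  obtain ⟨t, htmem, htclosed, htsub⟩ := exists_mem_nhds_isClosed_subset (hP.mem_nhds hyP)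
  have hyW2 : y ∈ interior t := mem_interior_iff_mem_nhds.mpr htmem
  set C := closure (interior t) with hCdef
  have hCclosed : IsClosed C := isClosed_closure
  have hCsub : C ⊆ O ∩ U := by
    calc closure (interior t) ⊆ closure t := closure_mono interior_subset
    _ = t := htclosed.closure_eq
    _ ⊆ O ∩ U := htsub
  have hCV : C ⊆ Subtype.val '' V := by
    rw [himg]
    intro c hc
    exact ⟨hUA (hCsub hc).2, (hCsub hc).1⟩
  have hCdim : covdimLE C n :=
    covdimLE_down hCclosed (hCV.trans (Set.image_mono subset_closure)) hVdim
  refine Set.mem_sUnion.mpr ⟨Subtype.val '' ((Subtype.val : ↥(Set.univ : Set S) → S) ⁻¹' interior t),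
    ⟨(Subtype.val : ↥(Set.univ : Set S) → S) ⁻¹' interior t, ?_, ?_, rfl⟩, ?_⟩
  · exact isOpen_interior.preimage continuous_subtype_val
  · have hcl : closure ((Subtype.val : ↥(Set.univ : Set S) → S) ⁻¹' interior t)
        = (Subtype.val : ↥(Set.univ : Set S) → S) ⁻¹' C := by
      rw [Topology.IsInducing.subtypeVal.closure_eq_preimage_closure_image, hCdef]
      rw [Subtype.image_preimage_coe, Set.univ_inter]
    rw [hcl]
    exact covdimLE_up (Set.subset_univ C) hCdim
  · exact ⟨⟨y, Set.mem_univ y⟩, hyW2, rfl⟩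

set_option maxHeartbeats 1000000 in
/-- If the transfinite dimensional kernel of a metrisable space `S` is empty
(equivalently, `S_α = ∅` for some ordinal `α`), then `S_ω` has empty interior. -/
theorem stmt7 {S : Type*} [TopologicalSpace S] [TopologicalSpace.MetrizableSpace S]
    (h : ∃ α : Ordinal, kseq S α = ∅) :
    interior (kseq S Ordinal.omega0) = ∅ := by
  letI : MetricSpace S := TopologicalSpace.metrizableSpaceMetric S
  obtain ⟨α₀, hα₀⟩ := h
  by_contra hne
  obtain ⟨x, hx⟩ := Set.nonempty_iff_ne_empty.mpr hne
  have hUo : IsOpen (interior (kseq S Ordinal.omega0)) := isOpen_interior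
  have hUs : interior (kseq S Ordinal.omega0) ⊆ kseq S Ordinal.omega0 := interior_subset
  have key : ∀ α : Ordinal, interior (kseq S Ordinal.omega0) ⊆ kseq S α := by
    intro α
    induction α using Ordinal.induction with
    | h α IH =>
      rw [kseq_eq S α]
      intro y hy
      refine ⟨Set.mem_univ y, fun hmemu => ?_⟩
      obtain ⟨β, hyD⟩ := Set.mem_iUnion.mp hmemu
      have hUA : interior (kseq S Ordinal.omega0)
          ⊆ kseq S (Ordinal.omega0 * (β.1 / Ordinal.omega0)) :=
        IH _ (lt_of_le_of_lt (Ordinal.mul_div_le β.1 Ordinal.omega0) β.2)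
      obtain ⟨n, hn⟩ := Set.mem_iUnion.mp hyD
      obtain ⟨-, hyDn⟩ := Set.mem_iUnion.mp hn
      exact notin_kseq_omega (mem_Dnat_univ hUo hUA hy hyDn) (hUs hy)
  have hfin := key α₀ hx
  rw [hα₀] at hfin
  exact hfin
end

section
/- Let T be a compact metrisable space, m ≥ 1 and k ∈ ℕ. Define V_{m,k} to be the set of compatible metrics d on T for which there exist a compact set K ⊆ T and a function h : K → ℝ with m⁻¹·d(x,y) ≤ |h(x)−h(y)| ≤ m·d(x,y) for all x,y ∈ K and such that the Lebesgue measure of h(K) is at least 1/k. Then V_{m,k} is closed in the space M^T of compatible metrics on T, equipped with the topology of uniform convergence. -/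
open MeasureTheory

/-- A metric `d` on a topological space is compatible if it satisfies the metric
axioms and generates the topology. -/
def IsCompatMetric {T : Type*} [TopologicalSpace T] (d : T → T → ℝ) : Prop :=
  (∀ x y, d x y = d y x) ∧ (∀ x y, d x y = 0 ↔ x = y) ∧
  (∀ x y z, d x z ≤ d x y + d y z) ∧
  (∀ s : Set T, IsOpen s ↔ ∀ x ∈ s, ∃ ε > 0, {y | d x y < ε} ⊆ s)

/-- `M^T`: the set of compatible metrics on `T`, viewed inside the space of functions
on `T × T` with the topology of uniform convergence. -/
def MT (T : Type*) [TopologicalSpace T] : Set (UniformFun (T × T) ℝ) :=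
  {f | IsCompatMetric fun x y => UniformFun.toFun f (x, y)}

open Filter Topology Metric Set

namespace CompatAux

variable {T : Type*} [TopologicalSpace T]

theorem self_eq_zero {d : T → T → ℝ} (hd : IsCompatMetric d) (x : T) : d x x = 0 :=
  (hd.2.1 x x).mpr rfl

theorem nonneg {d : T → T → ℝ} (hd : IsCompatMetric d) (x y : T) : 0 ≤ d x y := by
  have h := hd.2.2.1 x y x
  rw [self_eq_zero hd, hd.1 y x] at h
  linarith

theorem isOpen_ball {d : T → T → ℝ} (hd : IsCompatMetric d) (x : T) (ε : ℝ) :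
    IsOpen {y | d x y < ε} := by
  rw [hd.2.2.2]
  intro z hz
  simp only [Set.mem_setOf_eq] at hz
  refine ⟨ε - d x z, by linarith, fun y hy => ?_⟩
  have := hd.2.2.1 x z y
  simp only [Set.mem_setOf_eq] at hy ⊢
  linarith

theorem continuous {d : T → T → ℝ} (hd : IsCompatMetric d) :
    Continuous fun p : T × T => d p.1 p.2 := by
  rw [continuous_iff_continuousAt]
  intro p
  rw [ContinuousAt, Metric.tendsto_nhds]
  intro ε hε
  have hU : ({y | d p.1 y < ε / 2} ×ˢ {y | d p.2 y < ε / 2} : Set (T × T)) ∈ 𝓝 p := by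
    refine IsOpen.mem_nhds ((isOpen_ball hd _ _).prod (isOpen_ball hd _ _)) ?_
    constructor <;> · simp only [Set.mem_setOf_eq, self_eq_zero hd]; linarith
  filter_upwards [hU] with q hq
  obtain ⟨h1, h2⟩ := hq
  simp only [Set.mem_setOf_eq] at h1 h2
  rw [Real.dist_eq, abs_sub_lt_iff]
  have t1 := hd.2.2.1 q.1 p.1 q.2
  have t2 := hd.2.2.1 p.1 p.2 q.2
  have t3 := hd.2.2.1 p.1 q.1 p.2
  have t4 := hd.2.2.1 q.1 q.2 p.2
  have s1 := hd.1 q.1 p.1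
  have s2 := hd.1 q.2 p.2
  constructor <;> linarith

theorem tendsto_zero {d : T → T → ℝ} (hd : IsCompatMetric d) {ι : Type*} {l : Filter ι}
    {u : ι → T} {x : T} (hu : Tendsto u l (𝓝 x)) :
    Tendsto (fun i => d x (u i)) l (𝓝 0) := by
  rw [Metric.tendsto_nhds]
  intro ε hε
  have hB : {y | d x y < ε} ∈ 𝓝 x :=
    (isOpen_ball hd x ε).mem_nhds (by simp [self_eq_zero hd, hε])
  filter_upwards [hu hB] with i hi
  rw [Real.dist_eq, sub_zero, abs_of_nonneg (nonneg hd x _)]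
  exact hi

end CompatAux

/-- The set `V_{m,k}` of compatible metrics admitting a compact subset `K` and an
`m`-bilipschitz real-valued map on `K` whose image has Lebesgue measure at least `1/k`
is closed in `M^T` with the topology of uniform convergence. -/
theorem stmt9 {T : Type*} [TopologicalSpace T] [CompactSpace T]
    [TopologicalSpace.MetrizableSpace T]
    (m : ℝ) (hm : 1 ≤ m) (k : ℕ) (hk : 1 ≤ k) :
    IsClosed {d : ↥(MT T) | ∃ K : Set T, IsCompact K ∧ ∃ h : T → ℝ,
      (∀ x ∈ K, ∀ y ∈ K,
        m⁻¹ * UniformFun.toFun d.1 (x, y) ≤ |h x - h y| ∧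
        |h x - h y| ≤ m * UniformFun.toFun d.1 (x, y)) ∧
      (k : ENNReal)⁻¹ ≤ volume (h '' K)} := by
  letI : MetricSpace T := TopologicalSpace.metrizableSpaceMetric T
  haveI : (uniformity (UniformFun (T × T) ℝ)).IsCountablyGenerated := by
    obtain ⟨V, hV⟩ := Filter.exists_antitone_basis (uniformity ℝ)
    exact (UniformFun.hasBasis_uniformity_of_basis (T × T) ℝ hV.1).isCountablyGenerated
  apply IsSeqClosed.isClosed
  intro f d hf hfd
  simp only [Set.mem_setOf_eq] at hf ⊢
  -- uniform convergence in epsilon form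
  have hU : ∀ ε > (0:ℝ), ∀ᶠ n in Filter.atTop, ∀ p : T × T,
      dist (UniformFun.toFun d.1 p) (UniformFun.toFun (f n).1 p) < ε := by
    have h1 : Filter.Tendsto (fun n => ((f n : ↥(MT T)) : UniformFun (T × T) ℝ))
        Filter.atTop (nhds (d : UniformFun (T × T) ℝ)) :=
      ((continuous_subtype_val.tendsto d).comp hfd)
    have h2 := UniformFun.tendsto_iff_tendstoUniformly.mp h1
    exact fun ε hε => Metric.tendstoUniformly_iff.mp h2 ε hε
  choose K hKc h hbil hvol using hf
  have hD : IsCompatMetric fun x y => UniformFun.toFun d.1 (x, y) := d.2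
  have hKne : ∀ n, (K n).Nonempty := by
    intro n
    rw [Set.nonempty_iff_ne_empty]
    intro hE
    have hv := hvol n
    rw [hE, Set.image_empty, measure_empty] at hv
    have h0 : ((k : ENNReal))⁻¹ = 0 := le_antisymm hv (zero_le)
    rw [ENNReal.inv_eq_zero] at h0
    exact ENNReal.natCast_ne_top k h0
  haveI : Nonempty T := ⟨(hKne 0).some⟩
  have hcont : Continuous fun p : T × T => UniformFun.toFun d.1 p :=
    CompatAux.continuous hD
  obtain ⟨q₀, -, hq₀⟩ := isCompact_univ.exists_isMaxOn Set.univ_nonempty hcont.continuousOn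
  set C₀ : ℝ := UniformFun.toFun d.1 q₀ with hC₀def
  have hC₀ : ∀ p : T × T, UniformFun.toFun d.1 p ≤ C₀ := fun p => hq₀ (Set.mem_univ p)
  have hC₀0 : 0 ≤ C₀ := le_trans (CompatAux.nonneg hD (hKne 0).some (hKne 0).some) (hC₀ _)
  obtain ⟨n₀, hn₀⟩ := Filter.eventually_atTop.mp (hU 1 one_pos)
  set C : ℝ := m * (C₀ + 1) with hCdef
  have hCpos : 0 < C := by nlinarith
  have hCle : -C ≤ C := by linarith
  set g : ℕ → T → ℝ := fun n x => h n x - h n ((hKne n).some) with hgdef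
  have hgbound : ∀ n, n₀ ≤ n → ∀ x ∈ K n, g n x ∈ Set.Icc (-C) C := by
    intro n hn x hx
    have hb := (hbil n x hx ((hKne n).some) (hKne n).some_mem).2
    have hd1 := hn₀ n hn (x, (hKne n).some)
    rw [Real.dist_eq, abs_sub_lt_iff] at hd1
    have hDle := hC₀ (x, (hKne n).some)
    have habs : |g n x| ≤ C := by
      rw [hgdef]
      simp only
      nlinarith [abs_nonneg (h n x - h n ((hKne n).some))]
    exact abs_le.mp habs
  -- continuity of g n on K n
  have hgcont : ∀ n, ContinuousOn (g n) (K n) := by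
    intro n x hx
    have hd' : IsCompatMetric fun a b => UniformFun.toFun (f n).1 (a, b) := (f n).2
    have h0 : Filter.Tendsto (fun y : T => m * UniformFun.toFun (f n).1 (x, y))
        (nhdsWithin x (K n)) (nhds 0) := by
      have := (CompatAux.tendsto_zero hd'
        (tendsto_id.mono_left nhdsWithin_le_nhds : Filter.Tendsto id (nhdsWithin x (K n)) (nhds x))).const_mul m
      simpa using this
    have hsq : Filter.Tendsto (fun y => g n y - g n x) (nhdsWithin x (K n)) (nhds 0) := by
      refine squeeze_zero_norm' ?_ h0
      filter_upwards [self_mem_nhdsWithin] with y hy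
      have hb := (hbil n y hy x hx).2
      have hsym := hd'.1 y x
      have : g n y - g n x = h n y - h n x := by rw [hgdef]; ring
      rw [Real.norm_eq_abs, this]
      simpa only [hsym] using hb
    exact tendsto_sub_nhds_zero_iff.mp hsq
  -- the compact ambient space Z and graphs
  haveI : CompactSpace (Set.Icc (-C) C) := isCompact_iff_compactSpace.mp isCompact_Icc
  set F : ℕ → T → T × (Set.Icc (-C) C) :=
    fun n x => (x, Set.projIcc (-C) C hCle (g n x)) with hFdef
  have hFcont : ∀ n, ContinuousOn (F n) (K n) := by
    intro n
    exact continuousOn_id.prodMk ((continuous_projIcc.comp_continuousOn (hgcont n)))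
  set GN : ℕ → TopologicalSpace.NonemptyCompacts (T × (Set.Icc (-C) C)) :=
    fun n => ⟨⟨F n '' K n, (hKc n).image_of_continuousOn (hFcont n)⟩, (hKne n).image _⟩ with hGNdef
  obtain ⟨G, -, φ, hφ, hφt⟩ := isCompact_univ.tendsto_subseq (x := GN) (fun n => Set.mem_univ _)
  have hdist0 : Filter.Tendsto (fun j => dist (GN (φ j)) G) Filter.atTop (nhds 0) :=
    tendsto_iff_dist_tendsto_zero.mp hφt
  have hne_top : ∀ j, EMetric.hausdorffEdist ((GN (φ j) : Set (T × (Set.Icc (-C) C)))) (G : Set _) ≠ ⊤ :=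
    fun j => Metric.hausdorffEdist_ne_top_of_nonempty_of_bounded (GN (φ j)).nonempty G.nonempty
      (GN (φ j)).isCompact.isBounded G.isCompact.isBounded
  -- approximating sequences for points of G
  have approx : ∀ p ∈ (G : Set (T × (Set.Icc (-C) C))), ∃ u : ℕ → T × (Set.Icc (-C) C),
      (∀ j, u j ∈ (GN (φ j) : Set _)) ∧ Filter.Tendsto u Filter.atTop (nhds p) := by
    intro p hp
    have hpick : ∀ j, ∃ q ∈ (GN (φ j) : Set (T × (Set.Icc (-C) C))),
        dist p q < dist (GN (φ j)) G + 1 / (j + 1 : ℝ) := by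
      intro j
      refine Metric.exists_dist_lt_of_hausdorffDist_lt hp ?_ ?_
      · have : Metric.hausdorffDist (G : Set (T × (Set.Icc (-C) C))) (GN (φ j) : Set _)
            = dist (GN (φ j)) G := by
          rw [Metric.NonemptyCompacts.dist_eq, Metric.hausdorffDist_comm]
        rw [this]
        have : (0:ℝ) < 1 / (j + 1 : ℝ) := by positivity
        linarith
      · rw [EMetric.hausdorffEdist_comm]
        exact hne_top j
    choose u hu hud using hpick
    refine ⟨u, hu, ?_⟩
    rw [tendsto_iff_dist_tendsto_zero]
    have hlim0 : Filter.Tendsto (fun j => dist (GN (φ j)) G + 1 / (j + 1 : ℝ))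
        Filter.atTop (nhds 0) := by
      have := hdist0.add tendsto_one_div_add_atTop_nhds_zero_nat
      simpa using this
    exact squeeze_zero (fun j => dist_nonneg) (fun j => (dist_comm (u j) p ▸ (hud j).le)) hlim0
  -- the key bilipschitz property of points of G
  have key : ∀ p ∈ (G : Set (T × (Set.Icc (-C) C))), ∀ q ∈ (G : Set (T × (Set.Icc (-C) C))),
      m⁻¹ * UniformFun.toFun d.1 (p.1, q.1) ≤ |(p.2 : ℝ) - (q.2 : ℝ)| ∧
      |(p.2 : ℝ) - (q.2 : ℝ)| ≤ m * UniformFun.toFun d.1 (p.1, q.1) := by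
    intro p hp q hq
    obtain ⟨u, hu, hut⟩ := approx p hp
    obtain ⟨v, hv, hvt⟩ := approx q hq
    choose a ha hFa using fun j => hu j
    choose b hb hFb using fun j => hv j
    have hu1 : ∀ j, (u j).1 = a j := fun j => by rw [← hFa j]
    have hv1 : ∀ j, (v j).1 = b j := fun j => by rw [← hFb j]
    have hat : Filter.Tendsto a Filter.atTop (nhds p.1) := by
      have := (continuous_fst.tendsto p).comp hut
      simpa [Function.comp_def, hu1] using this
    have hbt : Filter.Tendsto b Filter.atTop (nhds q.1) := by
      have := (continuous_fst.tendsto q).comp hvt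
      simpa [Function.comp_def, hv1] using this
    have hu2 : Filter.Tendsto (fun j => ((u j).2 : ℝ)) Filter.atTop (nhds (p.2 : ℝ)) :=
      ((continuous_subtype_val.comp continuous_snd).tendsto p).comp hut
    have hv2 : Filter.Tendsto (fun j => ((v j).2 : ℝ)) Filter.atTop (nhds (q.2 : ℝ)) :=
      ((continuous_subtype_val.comp continuous_snd).tendsto q).comp hvt
    have hev : ∀ᶠ j in Filter.atTop,
        ((u j).2 : ℝ) = g (φ j) (a j) ∧ ((v j).2 : ℝ) = g (φ j) (b j) := by
      filter_upwards [hφ.tendsto_atTop.eventually_ge_atTop n₀] with j hj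
      constructor
      · rw [← hFa j]
        show ((Set.projIcc (-C) C hCle (g (φ j) (a j)) : Set.Icc (-C) C) : ℝ) = _
        rw [Set.projIcc_of_mem hCle (hgbound (φ j) hj (a j) (ha j))]
      · rw [← hFb j]
        show ((Set.projIcc (-C) C hCle (g (φ j) (b j)) : Set.Icc (-C) C) : ℝ) = _
        rw [Set.projIcc_of_mem hCle (hgbound (φ j) hj (b j) (hb j))]
    have hdt : Filter.Tendsto (fun j => UniformFun.toFun (f (φ j)).1 (a j, b j))
        Filter.atTop (nhds (UniformFun.toFun d.1 (p.1, q.1))) := by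
      rw [Metric.tendsto_nhds]
      intro ε hε
      have h1 : ∀ᶠ j in Filter.atTop, ∀ pt : T × T,
          dist (UniformFun.toFun d.1 pt) (UniformFun.toFun (f (φ j)).1 pt) < ε / 2 :=
        hφ.tendsto_atTop.eventually (hU (ε / 2) (by linarith))
      have h2 : Filter.Tendsto (fun j => UniformFun.toFun d.1 (a j, b j)) Filter.atTop
          (nhds (UniformFun.toFun d.1 (p.1, q.1))) :=
        (hcont.tendsto (p.1, q.1)).comp (hat.prodMk_nhds hbt)
      have h2' := Metric.tendsto_nhds.mp h2 (ε / 2) (by linarith)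
      filter_upwards [h1, h2'] with j hj1 hj2
      calc dist (UniformFun.toFun (f (φ j)).1 (a j, b j)) (UniformFun.toFun d.1 (p.1, q.1))
          ≤ dist (UniformFun.toFun (f (φ j)).1 (a j, b j)) (UniformFun.toFun d.1 (a j, b j))
            + dist (UniformFun.toFun d.1 (a j, b j)) (UniformFun.toFun d.1 (p.1, q.1)) :=
            dist_triangle _ _ _
        _ < ε / 2 + ε / 2 := by
            refine add_lt_add ?_ hj2
            rw [dist_comm]
            exact hj1 _
        _ = ε := by ring
    have habs : Filter.Tendsto (fun j => |((u j).2 : ℝ) - ((v j).2 : ℝ)|) Filter.atTop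
        (nhds (|(p.2 : ℝ) - (q.2 : ℝ)|)) := (hu2.sub hv2).abs
    constructor
    · refine le_of_tendsto_of_tendsto (hdt.const_mul m⁻¹) habs ?_
      filter_upwards [hev] with j hj
      rw [hj.1, hj.2]
      have hb' := (hbil (φ j) (a j) (ha j) (b j) (hb j)).1
      have hgd : g (φ j) (a j) - g (φ j) (b j) = h (φ j) (a j) - h (φ j) (b j) := by
        rw [hgdef]; ring
      rw [hgd]
      exact hb'
    · refine le_of_tendsto_of_tendsto habs (hdt.const_mul m) ?_
      filter_upwards [hev] with j hj
      rw [hj.1, hj.2]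
      have hb' := (hbil (φ j) (a j) (ha j) (b j) (hb j)).2
      have hgd : g (φ j) (a j) - g (φ j) (b j) = h (φ j) (a j) - h (φ j) (b j) := by
        rw [hgdef]; ring
      rw [hgd]
      exact hb'
  -- define the limit compact set and function
  set A : Set ℝ := (fun z : T × (Set.Icc (-C) C) => (z.2 : ℝ)) '' (G : Set _) with hAdef
  have hGc : IsCompact (G : Set (T × (Set.Icc (-C) C))) := G.isCompact
  have hAc : IsCompact A := hGc.image (continuous_subtype_val.comp continuous_snd)
  set Kf : Set T := Prod.fst '' (G : Set (T × (Set.Icc (-C) C))) with hKfdef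
  have hKfc : IsCompact Kf := hGc.image continuous_fst
  set hl : T → ℝ := fun x => sSup ((fun z : T × (Set.Icc (-C) C) => (z.2 : ℝ)) ''
      ((G : Set _) ∩ (Prod.fst ⁻¹' {x}))) with hhldef
  have hmem : ∀ x ∈ Kf, ∃ z ∈ (G : Set (T × (Set.Icc (-C) C))), z.1 = x ∧ (z.2 : ℝ) = hl x := by
    intro x hx
    have hne : ((fun z : T × (Set.Icc (-C) C) => (z.2 : ℝ)) ''
        ((G : Set _) ∩ (Prod.fst ⁻¹' {x}))).Nonempty := by
      obtain ⟨z, hz, rfl⟩ := hx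
      exact ⟨(z.2 : ℝ), ⟨z, ⟨hz, rfl⟩, rfl⟩⟩
    have hcpt : IsCompact ((fun z : T × (Set.Icc (-C) C) => (z.2 : ℝ)) ''
        ((G : Set _) ∩ (Prod.fst ⁻¹' {x}))) :=
      ((hGc.inter_right (isClosed_singleton.preimage continuous_fst)).image
        (continuous_subtype_val.comp continuous_snd))
    obtain ⟨z, ⟨hzG, hzx⟩, hz2⟩ := hcpt.sSup_mem hne
    exact ⟨z, hzG, hzx, hz2⟩
  have himg : hl '' Kf = A := by
    apply Set.Subset.antisymm
    · rintro _ ⟨x, hx, rfl⟩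
      obtain ⟨z, hzG, hz1, hz2⟩ := hmem x hx
      exact ⟨z, hzG, hz2⟩
    · rintro _ ⟨z, hzG, rfl⟩
      have hx : z.1 ∈ Kf := ⟨z, hzG, rfl⟩
      obtain ⟨w, hwG, hw1, hw2⟩ := hmem z.1 hx
      have hzw := (key z hzG w hwG).2
      rw [hw1] at hzw
      rw [CompatAux.self_eq_zero hD z.1, mul_zero] at hzw
      have hzeq : (z.2 : ℝ) = (w.2 : ℝ) := by
        have := abs_nonpos_iff.mp hzw
        linarith [sub_eq_zero.mp this]
      exact ⟨z.1, hx, by rw [← hw2, ← hzeq]⟩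
  -- measure lower bound
  have hcth : ∀ ε > (0:ℝ), (k : ENNReal)⁻¹ ≤ volume (Metric.cthickening ε A) := by
    intro ε hε
    have hev : ∀ᶠ j in Filter.atTop, dist (GN (φ j)) G < ε :=
      hdist0.eventually_lt_const hε
    obtain ⟨j, hjd, hjn⟩ := (hev.and (hφ.tendsto_atTop.eventually_ge_atTop n₀)).exists
    have hsub : g (φ j) '' K (φ j) ⊆ Metric.thickening ε A := by
      rintro _ ⟨x, hx, rfl⟩
      have hFmem : F (φ j) x ∈ (GN (φ j) : Set (T × (Set.Icc (-C) C))) := ⟨x, hx, rfl⟩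
      have hd' : Metric.hausdorffDist (GN (φ j) : Set (T × (Set.Icc (-C) C))) (G : Set _) < ε := by
        rw [← Metric.NonemptyCompacts.dist_eq]
        exact hjd
      obtain ⟨z, hzG, hzd⟩ := Metric.exists_dist_lt_of_hausdorffDist_lt hFmem hd' (hne_top j)
      rw [Metric.mem_thickening_iff]
      refine ⟨(z.2 : ℝ), ⟨z, hzG, rfl⟩, ?_⟩
      have h2 : dist ((F (φ j) x).2) z.2 ≤ dist (F (φ j) x) z := by
        rw [Prod.dist_eq]
        exact le_max_right _ _
      have h4 : ((F (φ j) x).2 : ℝ) = g (φ j) x := by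
        show ((Set.projIcc (-C) C hCle (g (φ j) x) : Set.Icc (-C) C) : ℝ) = _
        rw [Set.projIcc_of_mem hCle (hgbound (φ j) hjn x hx)]
      calc dist (g (φ j) x) ((z.2 : ℝ)) = dist ((F (φ j) x).2) z.2 := by
            rw [Subtype.dist_eq, h4]
        _ ≤ dist (F (φ j) x) z := h2
        _ < ε := hzd
    calc (k : ENNReal)⁻¹ ≤ volume (h (φ j) '' K (φ j)) := hvol _
      _ = volume (g (φ j) '' K (φ j)) := by
          have himg2 : g (φ j) '' K (φ j) =
              (fun a => a + h (φ j) ((hKne (φ j)).some)) ⁻¹' (h (φ j) '' K (φ j)) := by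
            ext a
            simp only [Set.mem_image, Set.mem_preimage, hgdef]
            constructor
            · rintro ⟨x, hx, rfl⟩
              exact ⟨x, hx, by ring⟩
            · rintro ⟨x, hx, hxa⟩
              exact ⟨x, hx, by linarith⟩
          rw [himg2, measure_preimage_add_right]
      _ ≤ volume (Metric.thickening ε A) := measure_mono hsub
      _ ≤ volume (Metric.cthickening ε A) :=
          measure_mono (Metric.thickening_subset_cthickening ε A)
  have hvolA : (k : ENNReal)⁻¹ ≤ volume A := by
    have htend := tendsto_measure_cthickening_of_isCompact (μ := volume) hAc
    have htend' : Filter.Tendsto (fun r => volume (Metric.cthickening r A))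
        (nhdsWithin 0 (Set.Ioi (0:ℝ))) (nhds (volume A)) :=
      htend.mono_left nhdsWithin_le_nhds
    refine ge_of_tendsto htend' ?_
    filter_upwards [self_mem_nhdsWithin] with ε hε
    exact hcth ε hε
  refine ⟨Kf, hKfc, hl, fun x hx y hy => ?_, by rw [himg]; exact hvolA⟩
  obtain ⟨zx, hzxG, hzx1, hzx2⟩ := hmem x hx
  obtain ⟨zy, hzyG, hzy1, hzy2⟩ := hmem y hy
  have hkey := key zx hzxG zy hzyG
  rw [hzx1, hzy1, hzx2, hzy2] at hkey
  exact hkey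
end

section
/- Let T be a compact metric space with metric d, ε > 0, and suppose V is a finite open cover of T with diam_d(V) < ε/6 for each V ∈ V, a point a_V chosen in each V with a_V ∉ ⋃(V∖{V}), a subfamily W ⊆ V such that d(a_W, a_{W'}) > ε/3 for distinct W, W' ∈ W, and a map f : V → W with f(W) = W for W ∈ W and d(a_V, a_{f(V)}) ≤ ε/3 for all V ∈ V. Define U_W = ⋃ f⁻¹(W) for W ∈ W. Then: (i) a_W ∈ U_W and a_{W'} ∉ U_W for W' ≠ W; (ii) U_W ⊆ B_{ε/2}(a_W) for each W ∈ W; (iii) if V has order at most r then {U_W : W ∈ W} has order at most r. -/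
/-- Combinatorial core of the construction of a nice cover: merging the members of a
fine cover `𝒱` along the map `f` onto the subfamily `𝒲` produces sets `U_W` with the
stated separation, localisation and order properties. -/
theorem stmt13 {T : Type*} [MetricSpace T] [CompactSpace T] (ε : ℝ) (hε : 0 < ε)
    (𝒱 : Finset (Set T)) (hopen : ∀ V ∈ 𝒱, IsOpen V)
    (hcover : ⋃₀ (𝒱 : Set (Set T)) = Set.univ)
    (hdiam : ∀ V ∈ 𝒱, ∀ x ∈ V, ∀ y ∈ V, dist x y < ε / 6)
    (a : Set T → T) (ha : ∀ V ∈ 𝒱, a V ∈ V)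
    (ha' : ∀ V ∈ 𝒱, ∀ V' ∈ 𝒱, V' ≠ V → a V ∉ V')
    (𝒲 : Finset (Set T)) (h𝒲 : 𝒲 ⊆ 𝒱)
    (hsep : ∀ W ∈ 𝒲, ∀ W' ∈ 𝒲, W ≠ W' → ε / 3 < dist (a W) (a W'))
    (f : Set T → Set T) (hf1 : ∀ V ∈ 𝒱, f V ∈ 𝒲) (hf2 : ∀ W ∈ 𝒲, f W = W)
    (hf3 : ∀ V ∈ 𝒱, dist (a V) (a (f V)) ≤ ε / 3)
    (U : Set T → Set T) (hU : ∀ W, U W = ⋃₀ {V | V ∈ 𝒱 ∧ f V = W}) :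
    (∀ W ∈ 𝒲, a W ∈ U W) ∧
    (∀ W ∈ 𝒲, ∀ W' ∈ 𝒲, W' ≠ W → a W' ∉ U W) ∧
    (∀ W ∈ 𝒲, U W ⊆ Metric.ball (a W) (ε / 2)) ∧
    (∀ r : ℕ, famOrderLE (𝒱 : Set (Set T)) r →
      famOrderLE {u : Set T | ∃ W ∈ 𝒲, u = U W} r) := by
  classical
  have hmem : ∀ W ∈ 𝒲, a W ∈ U W := by
    intro W hW
    rw [hU]
    exact ⟨W, ⟨h𝒲 hW, hf2 W hW⟩, ha W (h𝒲 hW)⟩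
  have hnot : ∀ W ∈ 𝒲, ∀ W' ∈ 𝒲, W' ≠ W → a W' ∉ U W := by
    intro W hW W' hW' hne hmem'
    rw [hU] at hmem'
    obtain ⟨V, ⟨hV𝒱, hfV⟩, hxV⟩ := hmem'
    by_cases hVW' : V = W'
    · subst hVW'
      exact hne (by rw [← hf2 V hW', hfV])
    · exact ha' W' (h𝒲 hW') V hV𝒱 hVW' hxV
  refine ⟨hmem, hnot, ?_, ?_⟩
  · intro W hW x hx
    rw [hU] at hx
    obtain ⟨V, ⟨hV𝒱, hfV⟩, hxV⟩ := hx
    have h1 : dist x (a V) < ε / 6 := hdiam V hV𝒱 x hxV (a V) (ha V hV𝒱)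
    have h2 : dist (a V) (a W) ≤ ε / 3 := by rw [← hfV]; exact hf3 V hV𝒱
    have := dist_triangle x (a V) (a W)
    simp only [Metric.mem_ball]
    linarith
  · intro r hr F hFsub ⟨x, hx⟩
    -- for each u ∈ F pick V ∈ 𝒱 with x ∈ V and U (f V) = u
    have key : ∀ u ∈ F, ∃ V, V ∈ 𝒱 ∧ x ∈ V ∧ U (f V) = u := by
      intro u huF
      obtain ⟨W, hW, rfl⟩ := hFsub huF
      have hxU : x ∈ U W := hx _ huF
      rw [hU] at hxU
      obtain ⟨V, ⟨hV𝒱, hfV⟩, hxV⟩ := hxU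
      exact ⟨V, hV𝒱, hxV, by rw [hfV]⟩
    set g : Set T → Set T := fun u =>
      if h : ∃ V, V ∈ 𝒱 ∧ x ∈ V ∧ U (f V) = u then h.choose else ∅ with hg
    have hgprop : ∀ u ∈ F, g u ∈ 𝒱 ∧ x ∈ g u ∧ U (f (g u)) = u := by
      intro u huF
      have h := key u huF
      simp only [hg, dif_pos h]
      exact h.choose_spec
    have hinj : Set.InjOn g F := by
      intro u₁ h₁ u₂ h₂ heq
      have p₁ := (hgprop u₁ h₁).2.2
      have p₂ := (hgprop u₂ h₂).2.2
      rw [← p₁, ← p₂, heq]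
    have hcard : F.card = (F.image g).card := (Finset.card_image_of_injOn hinj).symm
    rw [hcard]
    apply hr
    · intro V hV
      simp only [Finset.coe_image, Set.mem_image] at hV
      obtain ⟨u, hu, rfl⟩ := hV
      exact (hgprop u hu).1
    · refine ⟨x, ?_⟩
      intro V hV
      simp only [Finset.coe_image, Set.mem_image] at hV
      obtain ⟨u, hu, rfl⟩ := hV
      exact (hgprop u hu).2.1
end

section
/- Let T be a compact metrisable finite-dimensional space with covering dimension r, d a compatible metric, a_0 ∈ T, and ε > 0. Then there exist an open cover (U_i)_{i=0}^n of T of order at most r and points a_0, a_1, …, a_n ∈ T such that: (i) a_i ∈ U_j if and only if i = j; (ii) U_i ⊆ B^d_{ε/2}(a_i) for each i; (iii) d(a_i, a_j) > ε/3 whenever i ≠ j. -/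
/-- For a compact metric space of covering dimension at most `r`, a base point `a₀`
and `ε > 0`, there is an open cover of order at most `r` together with points as in
the paper's Lemma: `a_i ∈ U_j ↔ i = j`, `U_i ⊆ B_{ε/2}(a_i)` and `d(a_i,a_j) > ε/3`. -/
theorem stmt14 {T : Type*} [MetricSpace T] [CompactSpace T] (r : ℕ)
    (hdim : covdimLE T r) (a₀ : T) (ε : ℝ) (hε : 0 < ε) :
    ∃ (n : ℕ) (U : Fin (n + 1) → Set T) (a : Fin (n + 1) → T),
      a 0 = a₀ ∧ (∀ i, IsOpen (U i)) ∧ (⋃ i, U i) = Set.univ ∧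
      (∀ s : Finset (Fin (n + 1)), (⋂ i ∈ s, U i).Nonempty → s.card ≤ r + 1) ∧
      (∀ i j, a i ∈ U j ↔ i = j) ∧
      (∀ i, U i ⊆ Metric.ball (a i) (ε / 2)) ∧
      (∀ i j, i ≠ j → ε / 3 < dist (a i) (a j)) := by

  classical
  have hε2 : (0:ℝ) < ε/2 := by linarith
  obtain ⟨t, -, htfin, htcov⟩ :=
    finite_cover_balls_of_compact (isCompact_univ (X := T)) (show (0:ℝ) < ε/4 by linarith)
  set N : ℕ := htfin.toFinset.card with hN
  have hctr : ∀ x : T, ∃ y, y ∈ t ∧ x ∈ Metric.ball y (ε/4) := by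
    intro x
    have := htcov (Set.mem_univ x)
    simpa using this
  choose c hcmem hcball using hctr
  set Sep : Finset T → Prop := fun s => ∀ x ∈ s, ∀ y ∈ s, x ≠ y → ε/2 ≤ dist x y with hSep
  have bound : ∀ s : Finset T, Sep s → s.card ≤ N := by
    intro s hs
    apply Finset.card_le_card_of_injOn c
    · intro x _; simpa using hcmem x
    · intro x hx y hy hxy
      by_contra hne
      have h1 : dist x (c x) < ε/4 := by simpa [Metric.mem_ball, dist_comm] using hcball x
      have h2 : dist y (c y) < ε/4 := by simpa [Metric.mem_ball, dist_comm] using hcball y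
      have hd : dist x y ≤ dist x (c x) + dist (c y) y := by
        rw [hxy]; exact dist_triangle x (c y) y
      have hsxy := hs x (by simpa using hx) y (by simpa using hy) hne
      rw [dist_comm (c y) y] at hd
      linarith
  set K : Set ℕ := {k | ∃ s : Finset T, a₀ ∈ s ∧ Sep s ∧ s.card = k} with hK
  have hKne : K.Nonempty := by
    refine ⟨1, {a₀}, by simp, ?_, by simp⟩
    intro x hx y hy hxy
    simp only [Finset.mem_singleton] at hx hy
    exact absurd (hx.trans hy.symm) hxy
  have hKbdd : BddAbove K := by
    refine ⟨N, ?_⟩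
    rintro k ⟨s, -, hsep, rfl⟩
    exact bound s hsep
  obtain ⟨S, haS, hSsep, hScard⟩ := Nat.sSup_mem hKne hKbdd
  have hmax : ∀ s : Finset T, a₀ ∈ s → Sep s → s.card ≤ sSup K := by
    intro s h1 h2
    exact le_csSup hKbdd ⟨s, h1, h2, rfl⟩
  have hScover : ∀ x : T, ∃ y ∈ S, dist x y < ε/2 := by
    intro x
    by_contra hcon
    push_neg at hcon
    have hxS : x ∉ S := by
      intro hx
      have := hcon x hx
      simp at this
      linarith
    have hsep' : Sep (insert x S) := by
      intro u hu v hv huv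
      rcases Finset.mem_insert.1 hu with hux | huS
      · rcases Finset.mem_insert.1 hv with hvx | hvS
        · exact absurd (hux.trans hvx.symm) huv
        · rw [hux]; exact hcon v hvS
      · rcases Finset.mem_insert.1 hv with hvx | hvS
        · rw [hvx, dist_comm]; exact hcon u huS
        · exact hSsep u huS v hvS huv
    have := hmax (insert x S) (Finset.mem_insert_of_mem haS) hsep'
    rw [Finset.card_insert_of_notMem hxS, hScard] at this
    omega
  have hk1 : 1 ≤ sSup K := by
    have h1 : ({a₀} : Finset T).card ≤ sSup K := by
      refine hmax _ (by simp) ?_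
      intro u hu v hv huv
      simp only [Finset.mem_singleton] at hu hv
      exact absurd (hu.trans hv.symm) huv
    simpa using h1
  set n : ℕ := sSup K - 1 with hn
  set l : List T := a₀ :: (S.erase a₀).toList with hl
  have hlen : l.length = n + 1 := by
    simp only [hl, List.length_cons, Finset.length_toList,
      Finset.card_erase_of_mem haS, hScard, hn]
  have hnodup : l.Nodup := by
    simp only [hl, List.nodup_cons]
    exact ⟨by simp, (S.erase a₀).nodup_toList⟩
  set a : Fin (n + 1) → T := fun i => l.get (Fin.cast hlen.symm i) with ha
  have ha0 : a 0 = a₀ := rfl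
  have hamem : ∀ i, a i ∈ S := by
    intro i
    have hmem : a i ∈ l := l.get_mem _
    rcases List.mem_cons.1 hmem with h | h
    · rw [h]; exact haS
    · exact Finset.mem_of_mem_erase (Finset.mem_toList.1 h)
  have hainj : Function.Injective a := by
    intro i j hij
    have := (List.nodup_iff_injective_get.1 hnodup) hij
    simpa [Fin.ext_iff] using this
  have hsurj : ∀ y ∈ S, ∃ i, a i = y := by
    intro y hy
    have hyl : y ∈ l := by
      rcases eq_or_ne y a₀ with rfl | hne
      · exact List.mem_cons_self
      · exact List.mem_cons_of_mem _ (Finset.mem_toList.2 (Finset.mem_erase.2 ⟨hne, hy⟩))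
    obtain ⟨m, hm⟩ := List.mem_iff_get.1 hyl
    exact ⟨Fin.cast hlen m, hm⟩
  have hsepa : ∀ i j : Fin (n+1), i ≠ j → ε/2 ≤ dist (a i) (a j) := by
    intro i j hij
    exact hSsep (a i) (hamem i) (a j) (hamem j) (fun h => hij (hainj h))
  set 𝒰 : Finset (Set T) :=
    Finset.image (fun i => Metric.ball (a i) (ε/2)) Finset.univ with h𝒰
  have h𝒰open : ∀ W ∈ 𝒰, IsOpen W := by
    intro W hW
    obtain ⟨i, -, rfl⟩ := Finset.mem_image.1 hW
    exact Metric.isOpen_ball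
  have h𝒰cov : ⋃₀ (𝒰 : Set (Set T)) = Set.univ := by
    apply Set.eq_univ_of_forall
    intro x
    obtain ⟨y, hy, hxy⟩ := hScover x
    obtain ⟨i, rfl⟩ := hsurj y hy
    exact ⟨Metric.ball (a i) (ε/2), by simp [h𝒰], Metric.mem_ball.2 hxy⟩
  obtain ⟨𝒱, h𝒱open, h𝒱cov, h𝒱ref, h𝒱ord⟩ := hdim 𝒰 h𝒰open h𝒰cov
  have hf : ∀ V ∈ 𝒱, ∃ i : Fin (n+1), V ⊆ Metric.ball (a i) (ε/2) := by
    intro V hV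
    obtain ⟨W, hW𝒰, hVW⟩ := h𝒱ref V hV
    obtain ⟨i, -, rfl⟩ := Finset.mem_image.1 hW𝒰
    exact ⟨i, hVW⟩
  set f : Set T → Fin (n+1) := fun V =>
    if h : V ∈ 𝒱 then (hf V h).choose else 0 with hfdef
  have hfsub : ∀ V (hV : V ∈ 𝒱), V ⊆ Metric.ball (a (f V)) (ε/2) := by
    intro V hV
    simp only [hfdef, dif_pos hV]
    exact (hf V hV).choose_spec
  set U : Fin (n+1) → Set T := fun i => ⋃ V ∈ 𝒱.filter (fun V => f V = i), V with hU
  have hkey : ∀ (i : Fin (n+1)) (V : Set T), V ∈ 𝒱 → a i ∈ V → f V = i := by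
    intro i V hV haiV
    by_contra hne
    have h1 : dist (a i) (a (f V)) < ε/2 := Metric.mem_ball.1 (hfsub V hV haiV)
    have h2 := hsepa i (f V) (fun h => hne h.symm)
    linarith
  refine ⟨n, U, a, ha0, ?_, ?_, ?_, ?_, ?_, ?_⟩
  · intro i
    exact isOpen_biUnion fun V hV => h𝒱open V (Finset.mem_filter.1 hV).1
  · apply Set.eq_univ_of_forall
    intro x
    have hx : x ∈ ⋃₀ (𝒱 : Set (Set T)) := h𝒱cov ▸ Set.mem_univ x
    obtain ⟨V, hV, hxV⟩ := hx
    refine Set.mem_iUnion.2 ⟨f V, ?_⟩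
    exact Set.mem_biUnion (Finset.mem_filter.2 ⟨hV, rfl⟩) hxV
  · rintro s ⟨x, hx⟩
    simp only [Set.mem_iInter] at hx
    have hchoice : ∀ i ∈ s, ∃ V, V ∈ 𝒱 ∧ f V = i ∧ x ∈ V := by
      intro i hi
      have hxi := hx i hi
      simp only [hU, Set.mem_iUnion, Finset.mem_filter] at hxi
      obtain ⟨V, ⟨⟨hV, hfV⟩, hxV⟩⟩ := hxi
      exact ⟨V, hV, hfV, hxV⟩
    choose g hg𝒱 hgf hgx using hchoice
    set F : Finset (Set T) := s.attach.image (fun i => g i.1 i.2) with hF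
    have hFsub : (F : Set (Set T)) ⊆ (𝒱 : Set (Set T)) := by
      intro V hV
      simp only [hF, Finset.coe_image, Set.mem_image] at hV
      obtain ⟨i, -, rfl⟩ := hV
      exact hg𝒱 i.1 i.2
    have hFne : (⋂₀ (F : Set (Set T))).Nonempty := by
      refine ⟨x, ?_⟩
      intro V hV
      simp only [hF, Finset.coe_image, Set.mem_image] at hV
      obtain ⟨i, -, rfl⟩ := hV
      exact hgx i.1 i.2
    have hcard : F.card = s.card := by
      have hinj : Function.Injective (fun i : {x // x ∈ s} => g i.1 i.2) := by
        intro i j hij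
        dsimp only at hij
        have heq : f (g i.1 i.2) = f (g j.1 j.2) := by rw [hij]
        rw [hgf i.1 i.2, hgf j.1 j.2] at heq
        exact Subtype.ext heq
      rw [hF, Finset.card_image_of_injective _ hinj, Finset.card_attach]
    have := h𝒱ord F hFsub hFne
    omega
  · intro i j
    constructor
    · intro hij
      simp only [hU, Set.mem_iUnion, Finset.mem_filter] at hij
      obtain ⟨V, ⟨⟨hV, hfV⟩, haiV⟩⟩ := hij
      rw [← hfV, hkey i V hV haiV]
    · rintro rfl
      have hx : a i ∈ ⋃₀ (𝒱 : Set (Set T)) := h𝒱cov ▸ Set.mem_univ (a i)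
      obtain ⟨V, hV, haiV⟩ := hx
      simp only [hU, Set.mem_iUnion, Finset.mem_filter]
      exact ⟨V, ⟨hV, hkey i V hV haiV⟩, haiV⟩
  · intro i x hx
    simp only [hU, Set.mem_iUnion, Finset.mem_filter] at hx
    obtain ⟨V, ⟨⟨hV, hfV⟩, hxV⟩⟩ := hx
    have := hfsub V hV hxV
    rwa [hfV] at this
  · intro i j hij
    have := hsepa i j hij
    linarith
end

section
/- Let (M,d) be a metric space, A = {a_0, …, a_n} ⊆ M a finite set, and (μ_i)_{i=0}^n a partition of unity on M (μ_i ≥ 0, Σ μ_i ≡ 1) such that each μ_i is L-Lipschitz with respect to a metric e on M, and such that at most r+1 of the values μ_0(x),…,μ_n(x) are nonzero for each x ∈ M. Suppose f : A → ℝ is 1-Lipschitz with respect to e, and suppose x, y ∈ M and i₀ are such that e(a_i, a_{i₀}) < δ whenever μ_i(x) ≠ 0 or μ_i(y) ≠ 0. Then |Σ_i f(a_i)μ_i(x) − Σ_i f(a_i)μ_i(y)| ≤ 2(r+1)·δ·L·e(x,y). -/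
/-- Estimate for `Σ_i f(a_i)μ_i`: if the partition of unity `(μ_i)` is `L`-Lipschitz
with at most `r+1` nonzero terms at each point, `f` is `1`-Lipschitz on the points
`a_i`, and all relevant `a_i` are within `δ` of `a_{i₀}`, then
`|Σ_i f(a_i)μ_i(x) − Σ_i f(a_i)μ_i(y)| ≤ 2(r+1)·δ·L·e(x,y)`. -/
theorem stmt17 {M : Type*} [MetricSpace M] (n r : ℕ)
    (a : Fin (n + 1) → M) (μ : Fin (n + 1) → M → ℝ)
    (hnonneg : ∀ i x, 0 ≤ μ i x) (hsum : ∀ x, ∑ i, μ i x = 1)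
    (L : ℝ) (hL : 0 ≤ L) (hlip : ∀ i x y, |μ i x - μ i y| ≤ L * dist x y)
    (hsupp : ∀ x : M, {i | μ i x ≠ 0}.ncard ≤ r + 1)
    (f : Fin (n + 1) → ℝ)
    (hf : ∀ i j, |f i - f j| ≤ dist (a i) (a j))
    (x y : M) (i₀ : Fin (n + 1)) (δ : ℝ)
    (hδ : ∀ i, (μ i x ≠ 0 ∨ μ i y ≠ 0) → dist (a i) (a i₀) < δ) :
    |(∑ i, f i * μ i x) - ∑ i, f i * μ i y| ≤ 2 * (r + 1) * δ * L * dist x y := by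
  classical
  set S : Finset (Fin (n + 1)) :=
    Finset.univ.filter (fun i => μ i x ≠ 0 ∨ μ i y ≠ 0) with hS
  have hcard : (S.card : ℝ) ≤ 2 * (r + 1) := by
    have h1 : S ⊆ Finset.univ.filter (fun i => μ i x ≠ 0) ∪
        Finset.univ.filter (fun i => μ i y ≠ 0) := by
      intro i hi
      simp only [hS, Finset.mem_filter, Finset.mem_union, Finset.mem_univ, true_and] at *
      tauto
    have hx : (Finset.univ.filter (fun i => μ i x ≠ 0)).card ≤ r + 1 := by
      have := hsupp x
      rwa [show {i | μ i x ≠ 0} = ↑(Finset.univ.filter (fun i => μ i x ≠ 0)) by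
        ext i; simp, Set.ncard_coe_finset] at this
    have hy : (Finset.univ.filter (fun i => μ i y ≠ 0)).card ≤ r + 1 := by
      have := hsupp y
      rwa [show {i | μ i y ≠ 0} = ↑(Finset.univ.filter (fun i => μ i y ≠ 0)) by
        ext i; simp, Set.ncard_coe_finset] at this
    calc (S.card : ℝ) ≤ ((Finset.univ.filter (fun i => μ i x ≠ 0)).card
          + (Finset.univ.filter (fun i => μ i y ≠ 0)).card : ℕ) := by
          exact_mod_cast (Finset.card_le_card h1).trans (Finset.card_union_le _ _)
      _ ≤ ((r + 1) + (r + 1) : ℕ) := by exact_mod_cast Nat.add_le_add hx hy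
      _ = 2 * (r + 1) := by push_cast; ring
  have key : (∑ i, f i * μ i x) - ∑ i, f i * μ i y
      = ∑ i ∈ S, (f i - f i₀) * (μ i x - μ i y) := by
    have h0 : ∑ i, (μ i x - μ i y) = 0 := by
      rw [Finset.sum_sub_distrib, hsum, hsum, sub_self]
    have h1 : ∑ i, (f i - f i₀) * (μ i x - μ i y)
        = ∑ i ∈ S, (f i - f i₀) * (μ i x - μ i y) := by
      symm
      apply Finset.sum_subset (Finset.subset_univ _)
      intro i _ hi
      simp only [hS, Finset.mem_filter, Finset.mem_univ, true_and, not_or, not_not] at hi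
      rw [hi.1, hi.2, sub_self, mul_zero]
    rw [← h1]
    have : ∑ i, (f i - f i₀) * (μ i x - μ i y)
        = ∑ i, f i * (μ i x - μ i y) - f i₀ * ∑ i, (μ i x - μ i y) := by
      rw [Finset.mul_sum, ← Finset.sum_sub_distrib]
      congr 1; ext i; ring
    rw [this, h0, mul_zero, sub_zero, ← Finset.sum_sub_distrib]
    congr 1; ext i; ring
  rw [key]
  calc |∑ i ∈ S, (f i - f i₀) * (μ i x - μ i y)|
      ≤ ∑ i ∈ S, |(f i - f i₀) * (μ i x - μ i y)| := Finset.abs_sum_le_sum_abs _ _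
    _ ≤ ∑ i ∈ S, δ * (L * dist x y) := by
        apply Finset.sum_le_sum
        intro i hi
        simp only [hS, Finset.mem_filter, Finset.mem_univ, true_and] at hi
        rw [abs_mul]
        have hfd : |f i - f i₀| ≤ δ := le_of_lt (lt_of_le_of_lt (hf i i₀) (hδ i hi))
        exact mul_le_mul hfd (hlip i x y) (abs_nonneg _) (le_trans (abs_nonneg _) hfd)
    _ = (S.card : ℝ) * (δ * (L * dist x y)) := by rw [Finset.sum_const, nsmul_eq_mul]
    _ ≤ 2 * (r + 1) * δ * L * dist x y := by
        obtain ⟨i, hi⟩ : ∃ i, μ i x ≠ 0 := by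
          by_contra h
          push_neg at h
          have := hsum x
          rw [Finset.sum_eq_zero (fun i _ => h i)] at this
          norm_num at this
        have hδpos : 0 < δ := lt_of_le_of_lt dist_nonneg (hδ i (Or.inl hi))
        have h2 : (S.card : ℝ) * (δ * (L * dist x y)) ≤ 2 * (r + 1) * (δ * (L * dist x y)) :=
          mul_le_mul_of_nonneg_right hcard (by positivity)
        linarith [h2]
end
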